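/- Let β > 1 with β ∉ ℕ. If w = w₁⋯wₙ is a full admissible word, then its last digit satisfies wₙ < ⌊β⌋. In particular, if 1 < β < 2 then wₙ = 0. -/

import Mathlib

noncomputable def Tb (β x : ℝ) : ℝ := β * x - ⌊β * x⌋

/-- The (i+1)-th digit of the β-expansion of x (0-indexed). -/
noncomputable def dig (β x : ℝ) (i : ℕ) : ℕ := (⌊β * (Tb β)^[i] x⌋).toNat

/-- w is an admissible word for base β. -/
def Adm (β : ℝ) (w : List ℕ) : Prop :=
  ∃ x, x ∈ Set.Ico (0:ℝ) 1 ∧ ∀ i (h : i < w.length), w[i] = dig β x i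

/-- u is an admissible digit sequence for base β. -/
def AdmSeq (β : ℝ) (u : ℕ → ℕ) : Prop :=
  ∃ x, x ∈ Set.Ico (0:ℝ) 1 ∧ ∀ i, u i = dig β x i

/-- The cylinder I(w) ⊆ [0,1). -/
def cyl (β : ℝ) (w : List ℕ) : Set ℝ :=
  {x | x ∈ Set.Ico (0:ℝ) 1 ∧ ∀ i (h : i < w.length), w[i] = dig β x i}

/-- w is a full word: T_β^{|w|} maps I(w) onto [0,1). -/
def Full (β : ℝ) (w : List ℕ) : Prop :=
  (Tb β)^[w.length] '' cyl β w = Set.Ico 0 1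

/-- The β-expansion of 1 is finite with length M. -/
def FiniteLen (β : ℝ) (M : ℕ) : Prop :=
  0 < M ∧ dig β 1 (M-1) ≠ 0 ∧ ∀ j, M ≤ j → dig β 1 j = 0

open Classical in
/-- The (i+1)-th digit of the modified β-expansion ε*(1,β) (0-indexed). -/
noncomputable def modExp (β : ℝ) (i : ℕ) : ℕ :=
  if h : ∃ M, FiniteLen β M then
    (if (i+1) % (Nat.find h) = 0 then dig β 1 (Nat.find h - 1) - 1
     else dig β 1 (i % Nat.find h))
  else dig β 1 i

/-- View a finite word as the sequence w0^∞. -/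
def wordSeq (w : List ℕ) (i : ℕ) : ℕ := w.getD i 0

/-- Strict lexicographic order on sequences. -/
def seqLt (u v : ℕ → ℕ) : Prop := ∃ k, (∀ i, i < k → u i = v i) ∧ u k < v k

/-- Strict lexicographic order on finite words (identified with w0^∞). -/
def wlt (u v : List ℕ) : Prop := seqLt (wordSeq u) (wordSeq v)

/-- Concatenation of a finite word with a sequence. -/
def catSeq (w : List ℕ) (u : ℕ → ℕ) (i : ℕ) : ℕ :=
  if h : i < w.length then w[i] else u (i - w.length)

open Classical in
/-- The largest position k ≤ s with ε_k ≠ 0 (greedy step). -/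
noncomputable def greedyStep (β : ℝ) (s : ℕ) : ℕ :=
  Nat.findGreatest (fun k => 1 ≤ k ∧ dig β 1 (k-1) ≠ 0) s

/-- τ_β(s): number of terms in the greedy representation of s by nonzero positions. -/
noncomputable def tau (β : ℝ) : ℕ → ℕ
  | 0 => 0
  | s + 1 => tau β (s - (greedyStep β (s+1) - 1)) + 1
decreasing_by omega

open Classical in
/-- r_s(β): maximal length of a string of 0's in ε₁*⋯ε_s*. -/
noncomputable def rrun (β : ℝ) (s : ℕ) : ℕ :=
  Nat.findGreatest (fun k => 1 ≤ k ∧ ∃ i, i + k ≤ s ∧ ∀ t, t < k → modExp β (i + t) = 0) s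

/-- v is the immediate successor of u in the lexicographic order on Σ_β^n. -/
def SuccIn (β : ℝ) (n : ℕ) (u v : List ℕ) : Prop :=
  u.length = n ∧ v.length = n ∧ Adm β u ∧ Adm β v ∧ wlt u v ∧
  ¬ ∃ z : List ℕ, z.length = n ∧ Adm β z ∧ wlt u z ∧ wlt z v

/-- There is a run of l consecutive non-full words in Σ_β^n. -/
def NonFullRun (β : ℝ) (n l : ℕ) : Prop :=
  ∃ f : ℕ → List ℕ,
    (∀ j, j < l → (f j).length = n ∧ Adm β (f j) ∧ ¬ Full β (f j)) ∧
    (∀ j, j + 1 < l → SuccIn β n (f j) (f (j+1)))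

/-- There is a maximal run of l consecutive non-full words in Σ_β^n. -/
def MaxNonFullRun (β : ℝ) (n l : ℕ) : Prop :=
  0 < l ∧ ∃ f : ℕ → List ℕ,
    (∀ j, j < l → (f j).length = n ∧ Adm β (f j) ∧ ¬ Full β (f j)) ∧
    (∀ j, j + 1 < l → SuccIn β n (f j) (f (j+1))) ∧
    (∀ u, SuccIn β n u (f 0) → Full β u) ∧
    (∀ u, SuccIn β n (f (l-1)) u → Full β u)

/-- There is a maximal run of l consecutive full words in Σ_β^n. -/
def MaxFullRun (β : ℝ) (n l : ℕ) : Prop :=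
  0 < l ∧ ∃ f : ℕ → List ℕ,
    (∀ j, j < l → (f j).length = n ∧ Adm β (f j) ∧ Full β (f j)) ∧
    (∀ j, j + 1 < l → SuccIn β n (f j) (f (j+1))) ∧
    (∀ u, SuccIn β n u (f 0) → ¬ Full β u) ∧
    (∀ u, SuccIn β n (f (l-1)) u → ¬ Full β u)

/-- The canonical decomposition of an admissible word, as in the structure theorem:
p.1 is the list of block lengths k₁,…,k_p and p.2 is the final length l. -/
def Decomp (β : ℝ) (w : List ℕ) (p : List ℕ × ℕ) : Prop :=
  1 ≤ p.2 ∧ (∀ k ∈ p.1, 1 ≤ k) ∧ p.1.sum + p.2 = w.length ∧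
  (∀ j, j < p.1.length →
    (∀ t, t < p.1.getD j 0 - 1 → w.getD ((p.1.take j).sum + t) 0 = dig β 1 t) ∧
    w.getD ((p.1.take j).sum + (p.1.getD j 0 - 1)) 0 < dig β 1 (p.1.getD j 0 - 1)) ∧
  (∀ t, t < p.2 - 1 → w.getD (p.1.sum + t) 0 = dig β 1 t) ∧
  w.getD (p.1.sum + (p.2 - 1)) 0 ≤ dig β 1 (p.2 - 1)


/-!
If `x` lies in the cylinder of `w`, then with `y = T^{n-1} x ∈ [0,1)` we have
`T^n x = β y - wₙ < β - wₙ`. A full word reaches every point of `[0,1)` this way, so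
`β - wₙ ≥ 1`, i.e. `wₙ ≤ β - 1 < ⌊β⌋`.
-/

lemma Tb_mem_Ico (β x : ℝ) : Tb β x ∈ Set.Ico (0 : ℝ) 1 :=
  ⟨sub_nonneg.mpr (Int.floor_le _), by rw [Tb]; linarith [Int.lt_floor_add_one (β * x)]⟩

lemma iterate_Tb_mem_Ico (β : ℝ) {x : ℝ} (hx : x ∈ Set.Ico (0 : ℝ) 1) (k : ℕ) :
    (Tb β)^[k] x ∈ Set.Ico (0 : ℝ) 1 := by
  cases k with
  | zero => exact hx
  | succ k => rw [Function.iterate_succ_apply']; exact Tb_mem_Ico β _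

lemma iterate_Tb_succ {β x : ℝ} (hβ : 0 ≤ β) (hx : x ∈ Set.Ico (0 : ℝ) 1) (i : ℕ) :
    (Tb β)^[i + 1] x = β * (Tb β)^[i] x - dig β x i := by
  have hfloor : 0 ≤ ⌊β * (Tb β)^[i] x⌋ :=
    Int.floor_nonneg.mpr (mul_nonneg hβ (iterate_Tb_mem_Ico β hx i).1)
  have hdig : ((dig β x i : ℤ) : ℝ) = ⌊β * (Tb β)^[i] x⌋ := by
    rw [dig, Int.toNat_of_nonneg hfloor]
  rw [Function.iterate_succ_apply', Tb, ← hdig, Int.cast_natCast]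

lemma iterate_Tb_length_lt_of_mem_cyl {β x : ℝ} (hβ : 0 < β) {w : List ℕ} (hne : w ≠ [])
    (hx : x ∈ cyl β w) : (Tb β)^[w.length] x < β - w.getLast hne := by
  obtain ⟨hxI, hdigits⟩ := hx
  obtain ⟨m, hm⟩ : ∃ m, w.length = m + 1 :=
    Nat.exists_eq_add_one.mpr (List.length_pos_iff.mpr hne)
  have hlast : w.getLast hne = dig β x m := by
    simp only [List.getLast_eq_getElem, hm, Nat.add_sub_cancel]
    exact hdigits m (by omega)
  have hy := iterate_Tb_mem_Ico β hxI m
  rw [hm, iterate_Tb_succ hβ.le hxI, hlast]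
  nlinarith [hy.2]

lemma Full.getLast_le_sub_one {β : ℝ} (hβ : 0 < β) {w : List ℕ} (hne : w ≠ [])
    (hf : Full β w) : (w.getLast hne : ℝ) ≤ β - 1 := by
  by_contra! hgt
  set t := max 0 (β - w.getLast hne)
  have ht : t ∈ Set.Ico (0 : ℝ) 1 := ⟨le_max_left _ _, max_lt one_pos (by linarith)⟩
  rw [← hf] at ht
  obtain ⟨x, hx, hxt⟩ := ht
  have := iterate_Tb_length_lt_of_mem_cyl hβ hne hx
  linarith [le_max_right 0 (β - w.getLast hne)]

theorem stmt4_general (β : ℝ) (hβ : 1 < β) (w : List ℕ)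
    (hne : w ≠ []) (hf : Full β w) :
    w.getLast hne < Int.toNat ⌊β⌋ ∧ (β < 2 → w.getLast hne = 0) := by
  have hle := hf.getLast_le_sub_one (by linarith) hne
  have hlt : ((w.getLast hne : ℤ) : ℝ) < ⌊β⌋ := by
    rw [Int.cast_natCast]
    linarith [Int.sub_one_lt_floor β]
  have hlt_floor : (w.getLast hne : ℤ) < ⌊β⌋ := by exact_mod_cast hlt
  refine ⟨Int.lt_toNat.mpr hlt_floor, fun hβ2 => ?_⟩
  have : ⌊β⌋ < 2 := Int.floor_lt.mpr (by exact_mod_cast hβ2)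
  omega

/-- for noninteger β, the last digit of a full word is < ⌊β⌋;
if moreover 1 < β < 2 then the last digit is 0. -/
theorem stmt4 (β : ℝ) (hβ : 1 < β) (hβn : ∀ m : ℕ, β ≠ m) (w : List ℕ)
    (hne : w ≠ []) (h : Adm β w) (hf : Full β w) :
    w.getLast hne < Int.toNat ⌊β⌋ ∧ (β < 2 → w.getLast hne = 0) :=
  stmt4_general β hβ w hne hf
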